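/- arXiv:2605.25825 — 2 statements merged into one kernel-verified Lean document; each statement's English description precedes it below -/
import Mathlib

section
/- With T₁, T₂, T₃, g and η as in the Kenmotsu example, the Koszul expression satisfies K(T_i, T₃, T_j)(x) = 2·[gₓ(T_i(x), T_j(x)) − ηₓ(T_i(x))·ηₓ(T_j(x))] for all i, j ∈ {1, 2, 3} and every x with x₃ ≠ 0. (This is the Koszul-formula verification of the Kenmotsu condition ∇_X ξ = X − η(X)ξ on the orthonormal frame, with ξ = T₃.) -/
open scoped BigOperators

noncomputable section

/-- Points/vectors of ℝ³. -/
abbrev V3 := Fin 3 → ℝ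

/-- T₁(x) = x₃·e₁ -/
def T1 (x : V3) : V3 := ![x 2, 0, 0]

/-- T₂(x) = x₃·e₂ -/
def T2 (x : V3) : V3 := ![0, x 2, 0]

/-- T₃(x) = −x₃·e₃ -/
def T3 (x : V3) : V3 := ![0, 0, -(x 2)]

/-- The frame (T₁, T₂, T₃). -/
def T : Fin 3 → (V3 → V3) := ![T1, T2, T3]

/-- Lie bracket [X,Y](x) = (DY)ₓ(X(x)) − (DX)ₓ(Y(x)). -/
noncomputable def lieBracket (X Y : V3 → V3) (x : V3) : V3 :=
  fderiv ℝ Y x (X x) - fderiv ℝ X x (Y x)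

/-- The metric gₓ(u,v) = x₃⁻²·⟨u,v⟩ (Euclidean inner product). -/
noncomputable def gmet (x u v : V3) : ℝ := ((x 2) ^ 2)⁻¹ * ∑ i, u i * v i

/-- The 1-form ηₓ(v) = −v₃/x₃. -/
noncomputable def eta (x v : V3) : ℝ := -(v 2) / x 2

/-- The structure tensor φ: φ(e₁) = −e₂, φ(e₂) = e₁, φ(e₃) = 0. -/
def phi (v : V3) : V3 := ![v 1, -(v 0), 0]

/-- Directional derivative X·f at x: (Df)ₓ(X(x)). -/
noncomputable def dirD (X : V3 → V3) (f : V3 → ℝ) (x : V3) : ℝ := fderiv ℝ f x (X x)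

/-- The Koszul expression K(X,Y,Z). -/
noncomputable def koszul (X Y Z : V3 → V3) (x : V3) : ℝ :=
  dirD X (fun p => gmet p (Y p) (Z p)) x
    + dirD Y (fun p => gmet p (Z p) (X p)) x
    - dirD Z (fun p => gmet p (X p) (Y p)) x
    - gmet x (X x) (lieBracket Y Z x)
    - gmet x (Y x) (lieBracket X Z x)
    + gmet x (Z x) (lieBracket X Y x)

/-- Lie derivative of g along a vector field W:
(L_W g)(X,Y)(x) = W·(g(X,Y))(x) − gₓ([W,X](x), Y(x)) − gₓ(X(x), [W,Y](x)). -/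
noncomputable def lieDerivG (W X Y : V3 → V3) (x : V3) : ℝ :=
  dirD W (fun p => gmet p (X p) (Y p)) x
    - gmet x (lieBracket W X x) (Y x)
    - gmet x (X x) (lieBracket W Y x)

/-- The potential vector field V(x) = 2x₁·e₁ + 2x₂·e₂ + x₃·e₃. -/
def Vf (x : V3) : V3 := ![2 * x 0, 2 * x 1, x 2]


/-- Auxiliary: derivative CLMs of T1, T2, T3. -/
def L1 : V3 →L[ℝ] V3 := (ContinuousLinearMap.proj 2).smulRight ![1, 0, 0]
def L2 : V3 →L[ℝ] V3 := (ContinuousLinearMap.proj 2).smulRight ![0, 1, 0]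
def L3 : V3 →L[ℝ] V3 := (ContinuousLinearMap.proj 2).smulRight ![0, 0, -1]

lemma T1_eq : T1 = ⇑L1 := by
  funext x; ext i; fin_cases i <;> simp [T1, L1]

lemma T2_eq : T2 = ⇑L2 := by
  funext x; ext i; fin_cases i <;> simp [T2, L2]

lemma T3_eq : T3 = ⇑L3 := by
  funext x; ext i; fin_cases i <;> simp [T3, L3]

lemma fderiv_T1 (x : V3) : fderiv ℝ T1 x = L1 := by rw [T1_eq]; exact L1.fderiv
lemma fderiv_T2 (x : V3) : fderiv ℝ T2 x = L2 := by rw [T2_eq]; exact L2.fderiv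
lemma fderiv_T3 (x : V3) : fderiv ℝ T3 x = L3 := by rw [T3_eq]; exact L3.fderiv

lemma gTT (i j : Fin 3) (p : V3) (hp : p 2 ≠ 0) :
    gmet p (T i p) (T j p) = if i = j then 1 else 0 := by
  fin_cases i <;> fin_cases j <;>
    simp [gmet, T, T1, T2, T3, Fin.sum_univ_three] <;> field_simp <;> ring

lemma fderiv_g_zero (i j : Fin 3) (x : V3) (hx : x 2 ≠ 0) :
    fderiv ℝ (fun p => gmet p (T i p) (T j p)) x = 0 := by
  have hmem : {p : V3 | p 2 ≠ 0} ∈ nhds x :=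
    ((isOpen_compl_singleton.preimage (continuous_apply 2)).mem_nhds hx)
  have he : (fun p => gmet p (T i p) (T j p)) =ᶠ[nhds x]
      fun _ => (if i = j then (1 : ℝ) else 0) :=
    Filter.eventuallyEq_of_mem hmem (fun p hp => gTT i j p hp)
  rw [he.fderiv_eq]
  exact fderiv_const_apply _

/-- K(T_i, T₃, T_j) = 2·[g(T_i, T_j) − η(T_i)·η(T_j)], the Kenmotsu
condition ∇_X ξ = X − η(X)ξ on the orthonormal frame, with ξ = T₃. -/
theorem stmt_8 : ∀ i j : Fin 3, ∀ x : V3, x 2 ≠ 0 →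
    koszul (T i) T3 (T j) x
      = 2 * (gmet x (T i x) (T j x) - eta x (T i x) * eta x (T j x)) := by
  intro i j x hx
  have e3 : T3 = T 2 := rfl
  rw [e3]
  simp only [koszul, dirD, fderiv_g_zero 2 j x hx, fderiv_g_zero j i x hx,
    fderiv_g_zero i 2 x hx, ContinuousLinearMap.zero_apply]
  fin_cases i <;> fin_cases j <;>
    simp [T, lieBracket, fderiv_T1, fderiv_T2, fderiv_T3, L1, L2, L3,
      gmet, eta, T1, T2, T3, Fin.sum_univ_three] <;>
    field_simp <;> ring
end
end

section
/- Let V(x) = 2x₁·e₁ + 2x₂·e₂ + x₃·e₃ and let T₁, T₂, T₃, g be as in the Kenmotsu example. Define the Lie derivative of g along V on vector fields X, Y by (L_V g)(X, Y)(x) = V·(g(X,Y))(x) − gₓ([V, X](x), Y(x)) − gₓ(X(x), [V, Y](x)). Then for every x with x₃ ≠ 0: (L_V g)(T₁, T₁)(x) = 2, (L_V g)(T₂, T₂)(x) = 2, (L_V g)(T₃, T₃)(x) = 0; in particular the trace over the orthonormal frame, Σᵢ (L_V g)(Tᵢ, Tᵢ)(x), equals 4. -/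
open scoped BigOperators

noncomputable section

/-! Each Tᵢ is a g-unit field, so g(Tᵢ, Tᵢ) is locally constant and only the bracket terms of
(L_V g)(Tᵢ, Tᵢ) survive, giving −2 g([V, Tᵢ], Tᵢ). Since V and Tᵢ are linear,
[V, Tᵢ](x) = Tᵢ(V x) − V(Tᵢ x), which is −Tᵢ(x) for i = 1, 2 and 0 for i = 3. -/

open Filter Topology

lemma gmet_comm (x u v : V3) : gmet x u v = gmet x v u := by
  simp only [gmet, mul_comm (u _)]

lemma gmet_smul_left (x : V3) (c : ℝ) (u v : V3) : gmet x (c • u) v = c * gmet x u v := by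
  simp only [gmet, Pi.smul_apply, smul_eq_mul, mul_assoc, ← Finset.mul_sum]
  ring

lemma gmet_T_self (i : Fin 3) {p : V3} (hp : p 2 ≠ 0) : gmet p (T i p) (T i p) = 1 := by
  fin_cases i <;> simp [gmet, T, T1, T2, T3, Fin.sum_univ_three, ← sq, hp]

lemma gmet_T_self_eventually (i : Fin 3) {x : V3} (hx : x 2 ≠ 0) :
    ∀ᶠ p in 𝓝 x, gmet p (T i p) (T i p) = 1 :=
  ((continuous_apply 2).continuousAt.eventually_ne hx).mono fun _ hp => gmet_T_self i hp

lemma dirD_eq_zero_of_eventuallyEq_const (W : V3 → V3) {f : V3 → ℝ} {x : V3} {c : ℝ}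
    (h : f =ᶠ[𝓝 x] fun _ => c) : dirD W f x = 0 := by
  simp [dirD, h.fderiv_eq]

lemma lieDerivG_self_of_unit (W X : V3 → V3) {x : V3}
    (hX : ∀ᶠ p in 𝓝 x, gmet p (X p) (X p) = 1) :
    lieDerivG W X X x = -2 * gmet x (lieBracket W X x) (X x) := by
  rw [lieDerivG, dirD_eq_zero_of_eventuallyEq_const W hX, gmet_comm x (X x)]
  ring

lemma lieBracket_of_isLinearMap {X Y : V3 → V3} (hX : IsLinearMap ℝ X) (hY : IsLinearMap ℝ Y)
    (x : V3) : lieBracket X Y x = Y (X x) - X (Y x) := by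
  have hXd : fderiv ℝ X x = (hX.mk' X).toContinuousLinearMap :=
    (hX.mk' X).toContinuousLinearMap.fderiv
  have hYd : fderiv ℝ Y x = (hY.mk' Y).toContinuousLinearMap :=
    (hY.mk' Y).toContinuousLinearMap.fderiv
  rw [lieBracket, hXd, hYd]
  rfl

lemma isLinearMap_of_pi {X : V3 → V3} (hX : ∀ i, IsLinearMap ℝ fun v => X v i) :
    IsLinearMap ℝ X :=
  ⟨fun u v => funext fun i => (hX i).map_add u v, fun c v => funext fun i => (hX i).map_smul c v⟩

lemma isLinearMap_Vf : IsLinearMap ℝ Vf := by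
  refine isLinearMap_of_pi fun i => ⟨fun u v => ?_, fun c v => ?_⟩ <;>
    fin_cases i <;> simp [Vf] <;> ring

lemma isLinearMap_T (i : Fin 3) : IsLinearMap ℝ (T i) := by
  refine isLinearMap_of_pi fun j => ⟨fun u v => ?_, fun c v => ?_⟩ <;>
    fin_cases i <;> fin_cases j <;> simp [T, T1, T2, T3, add_comm]

lemma lieBracket_Vf_T (i : Fin 3) (x : V3) :
    lieBracket Vf (T i) x = (![-1, -1, 0] : Fin 3 → ℝ) i • T i x := by
  rw [lieBracket_of_isLinearMap isLinearMap_Vf (isLinearMap_T i)]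
  ext j; fin_cases i <;> fin_cases j <;> simp [T, T1, T2, T3, Vf] <;> ring

lemma lieDerivG_Vf_T (i : Fin 3) {x : V3} (hx : x 2 ≠ 0) :
    lieDerivG Vf (T i) (T i) x = -2 * (![-1, -1, 0] : Fin 3 → ℝ) i := by
  rw [lieDerivG_self_of_unit Vf (T i) (gmet_T_self_eventually i hx), lieBracket_Vf_T,
    gmet_smul_left, gmet_T_self i hx, mul_one]

/-- (L_V g)(T₁,T₁) = 2, (L_V g)(T₂,T₂) = 2, (L_V g)(T₃,T₃) = 0,
and the trace over the orthonormal frame equals 4. -/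
theorem stmt_11 : ∀ x : V3, x 2 ≠ 0 →
    lieDerivG Vf T1 T1 x = 2 ∧
    lieDerivG Vf T2 T2 x = 2 ∧
    lieDerivG Vf T3 T3 x = 0 ∧
    (∑ i : Fin 3, lieDerivG Vf (T i) (T i) x) = 4 := by
  intro x hx
  have h := fun i => lieDerivG_Vf_T i hx
  refine ⟨?_, ?_, ?_, ?_⟩
  · exact (h 0).trans (by simp)
  · exact (h 1).trans (by simp)
  · exact (h 2).trans (by simp)
  · simp only [Fin.sum_univ_three, h, Matrix.cons_val]
    norm_num
end
end
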